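/- In the signature with exactly two constant symbols a,b, with X = {χₙ | n ∈ ℕ} where χₙ is a classical sentence expressing that the domain has at least n elements: X ∪ {η} ⊨_id θ. -/
import Mathlib


namespace InqBQ

/-- A signature: predicate symbols and function symbols, each with an arity. -/
structure Sig where
  Pred : Type
  parity : Pred → ℕ
  Func : Type
  farity : Func → ℕ

/-- Terms over a signature, with variables indexed by `ℕ`. -/
inductive Term (σ : Sig) : Type where
  | var : ℕ → Term σ
  | func : (f : σ.Func) → (Fin (σ.farity f) → Term σ) → Term σ

/-- Formulas of InqBQ. -/
inductive Formula (σ : Sig) : Type where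
  | pred : (P : σ.Pred) → (Fin (σ.parity P) → Term σ) → Formula σ
  | eq : Term σ → Term σ → Formula σ
  | falsum : Formula σ
  | conj : Formula σ → Formula σ → Formula σ
  | idisj : Formula σ → Formula σ → Formula σ
  | impl : Formula σ → Formula σ → Formula σ
  | all : ℕ → Formula σ → Formula σ
  | iex : ℕ → Formula σ → Formula σ

variable {σ : Sig}

/-- ¬φ := φ → ⊥ -/
def Formula.neg (φ : Formula σ) : Formula σ := .impl φ .falsum

/-- ?φ := φ ⩒ ¬φ -/
def Formula.qm (φ : Formula σ) : Formula σ := .idisj φ φ.neg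

/-- ⊤ := ¬⊥ -/
def Formula.verum : Formula σ := Formula.neg .falsum

/-- Classical formulas: no inquisitive disjunction, no inquisitive existential. -/
def Formula.IsClassical : Formula σ → Prop
  | .pred _ _ => True
  | .eq _ _ => True
  | .falsum => True
  | .conj φ ψ => φ.IsClassical ∧ ψ.IsClassical
  | .idisj _ _ => False
  | .impl φ ψ => φ.IsClassical ∧ ψ.IsClassical
  | .all _ φ => φ.IsClassical
  | .iex _ _ => False

/-- The variable `n` occurs in a term. -/
def Term.VarOccurs : Term σ → ℕ → Prop
  | .var m, n => m = n
  | .func _ ts, n => ∃ i, (ts i).VarOccurs n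

/-- The variable `n` occurs free in a formula. -/
def Formula.FreeVar : Formula σ → ℕ → Prop
  | .pred _ ts, n => ∃ i, (ts i).VarOccurs n
  | .eq t t', n => t.VarOccurs n ∨ t'.VarOccurs n
  | .falsum, _ => False
  | .conj φ ψ, n => φ.FreeVar n ∨ ψ.FreeVar n
  | .idisj φ ψ, n => φ.FreeVar n ∨ ψ.FreeVar n
  | .impl φ ψ, n => φ.FreeVar n ∨ ψ.FreeVar n
  | .all x φ, n => n ≠ x ∧ φ.FreeVar n
  | .iex x φ, n => n ≠ x ∧ φ.FreeVar n

/-- A sentence is a formula with no free variables. -/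
def Formula.IsSentence (φ : Formula σ) : Prop := ∀ n, ¬ φ.FreeVar n

/-- A first-order information model `M = (W, D, I, ∼)`. -/
structure Model (σ : Sig) where
  W : Type
  D : Type
  wNonempty : Nonempty W
  dNonempty : Nonempty D
  predI : W → (P : σ.Pred) → (Fin (σ.parity P) → D) → Prop
  funcI : W → (f : σ.Func) → (Fin (σ.farity f) → D) → D
  eqI : W → D → D → Prop
  eqEquiv : ∀ w, Equivalence (eqI w)
  predCongr : ∀ w P (as bs : Fin (σ.parity P) → D),
      (∀ i, eqI w (as i) (bs i)) → (predI w P as ↔ predI w P bs)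
  funcCongr : ∀ w f (as bs : Fin (σ.farity f) → D),
      (∀ i, eqI w (as i) (bs i)) → eqI w (funcI w f as) (funcI w f bs)

/-- Denotation `[t]^g_w` of a term at a world under an assignment. -/
def Term.val (M : Model σ) (w : M.W) (g : ℕ → M.D) : Term σ → M.D
  | .var n => g n
  | .func f ts => M.funcI w f (fun i => (ts i).val M w g)

/-- The support relation `M, s ⊨_g φ`. -/
def Support (M : Model σ) : Set M.W → (ℕ → M.D) → Formula σ → Prop
  | s, g, .pred P ts => ∀ w ∈ s, M.predI w P (fun i => (ts i).val M w g)
  | s, g, .eq t t' => ∀ w ∈ s, M.eqI w (t.val M w g) (t'.val M w g)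
  | s, _, .falsum => s = ∅
  | s, g, .conj φ ψ => Support M s g φ ∧ Support M s g ψ
  | s, g, .idisj φ ψ => Support M s g φ ∨ Support M s g ψ
  | s, g, .impl φ ψ => ∀ t : Set M.W, t ⊆ s → Support M t g φ → Support M t g ψ
  | s, g, .all x φ => ∀ d : M.D, Support M s (Function.update g x d) φ
  | s, g, .iex x φ => ∃ d : M.D, Support M s (Function.update g x d) φ

/-- Id-models: `=` is interpreted as identity on the domain at each world. -/
def Model.IsId (M : Model σ) : Prop := ∀ w (d d' : M.D), M.eqI w d d' ↔ d = d'

/-- Entailment in InqBQ. -/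
def Entails (Φ : Set (Formula σ)) (ψ : Formula σ) : Prop :=
  ∀ (M : Model σ) (s : Set M.W) (g : ℕ → M.D),
    (∀ φ ∈ Φ, Support M s g φ) → Support M s g ψ

/-- Entailment restricted to id-models. -/
def EntailsId (Φ : Set (Formula σ)) (ψ : Formula σ) : Prop :=
  ∀ (M : Model σ), M.IsId → ∀ (s : Set M.W) (g : ℕ → M.D),
    (∀ φ ∈ Φ, Support M s g φ) → Support M s g ψ

/-- Validity in InqBQ. -/
def Valid (ψ : Formula σ) : Prop :=
  ∀ (M : Model σ) (s : Set M.W) (g : ℕ → M.D), Support M s g ψ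

/-- Validity over id-models. -/
def IdValid (ψ : Formula σ) : Prop :=
  ∀ (M : Model σ), M.IsId → ∀ (s : Set M.W) (g : ℕ → M.D), Support M s g ψ

/-- Equivalence of formulas. -/
def FmEquiv (φ ψ : Formula σ) : Prop :=
  ∀ (M : Model σ) (s : Set M.W) (g : ℕ → M.D), Support M s g φ ↔ Support M s g ψ

/-- A formula is truth-conditional if support at a state reduces to truth at each world. -/
def TruthConditional (φ : Formula σ) : Prop :=
  ∀ (M : Model σ) (s : Set M.W) (g : ℕ → M.D),
    Support M s g φ ↔ ∀ w ∈ s, Support M {w} g φ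

/-- A standard (Tarskian) relational structure for the signature. -/
structure Struc (σ : Sig) where
  D : Type
  dNonempty : Nonempty D
  predI : (P : σ.Pred) → (Fin (σ.parity P) → D) → Prop
  funcI : (f : σ.Func) → (Fin (σ.farity f) → D) → D

/-- Tarskian term denotation. -/
def Term.tval (A : Struc σ) (g : ℕ → A.D) : Term σ → A.D
  | .var n => g n
  | .func f ts => A.funcI f (fun i => (ts i).tval A g)

/-- Standard Tarskian satisfaction (reading `→` as material implication, `=` as identity). -/
def TSat (A : Struc σ) : (ℕ → A.D) → Formula σ → Prop
  | g, .pred P ts => A.predI P (fun i => (ts i).tval A g)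
  | g, .eq t t' => t.tval A g = t'.tval A g
  | _, .falsum => False
  | g, .conj φ ψ => TSat A g φ ∧ TSat A g ψ
  | g, .idisj φ ψ => TSat A g φ ∨ TSat A g ψ
  | g, .impl φ ψ => TSat A g φ → TSat A g ψ
  | g, .all x φ => ∀ d : A.D, TSat A (Function.update g x d) φ
  | g, .iex x φ => ∃ d : A.D, TSat A (Function.update g x d) φ

/-- Classical first-order (Tarskian) entailment. -/
def FOLEntails (Γ : Set (Formula σ)) (α : Formula σ) : Prop :=
  ∀ (A : Struc σ) (g : ℕ → A.D), (∀ γ ∈ Γ, TSat A g γ) → TSat A g α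

/-- The setoid on the domain given by `∼_w`. -/
def Model.setoidAt (M : Model σ) (w : M.W) : Setoid M.D := ⟨M.eqI w, M.eqEquiv w⟩

/-- The quotient relational structure `𝓜_w = (D/∼_w, I_w^∼)` induced at world `w`. -/
noncomputable def Model.quotStruc (M : Model σ) (w : M.W) : Struc σ where
  D := Quotient (M.setoidAt w)
  dNonempty := Nonempty.map (Quotient.mk (M.setoidAt w)) M.dNonempty
  predI P as := ∃ bs : Fin (σ.parity P) → M.D,
    (∀ i, Quotient.mk (M.setoidAt w) (bs i) = as i) ∧ M.predI w P bs
  funcI f as := Quotient.mk (M.setoidAt w) (M.funcI w f (fun i => (as i).out))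

/-- λt := ∃̷x (x = t). -/
def lam (x : ℕ) (t : Term σ) : Formula σ := .iex x (.eq (.var x) t)

/-- Conjunction of a finite list of formulas. -/
def conjList (l : List (Formula σ)) : Formula σ := l.foldr .conj Formula.verum

/-- x ≠ t. -/
def neTm (x : ℕ) (t : Term σ) : Formula σ := (Formula.eq (.var x) t).neg

/-- ∃̷x (x ≠ t). -/
def iexNe (t : Term σ) : Formula σ := .iex 0 (neTm 0 t)

/-- η := (=(a;b) ∧ =(b;a) ∧ ∃̷x(x≠b)) → ∃̷x(x≠a). -/
def etaOf (a b : Term σ) : Formula σ :=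
  .impl (.conj (.impl (lam 0 a) (lam 0 b))
          (.conj (.impl (lam 0 b) (lam 0 a)) (iexNe b)))
    (iexNe a)

/-- θ := ∃̷x ∃̷y ¬(x = a ∧ y = b). -/
def thetaOf (a b : Term σ) : Formula σ :=
  .iex 0 (.iex 1 (Formula.neg (.conj (.eq (.var 0) a) (.eq (.var 1) b))))

/-- ρ := ∀x∀y ?(x = y). -/
def rho : Formula σ := .all 0 (.all 1 (Formula.qm (.eq (.var 0) (.var 1))))

/-- The signature with exactly two constant symbols `a`, `b` (and no predicates). -/
def sigAB : Sig where
  Pred := Empty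
  parity := fun P => P.elim
  Func := Bool
  farity := fun _ => 0

/-- The constant `a`. -/
def tA : Term sigAB := .func false Fin.elim0

/-- The constant `b`. -/
def tB : Term sigAB := .func true Fin.elim0

def etaAB : Formula sigAB := etaOf tA tB

def thetaAB : Formula sigAB := thetaOf tA tB

/-- `a_w`. -/
def aVal (M : Model sigAB) (w : M.W) : M.D := M.funcI w false Fin.elim0

/-- `b_w`. -/
def bVal (M : Model sigAB) (w : M.W) : M.D := M.funcI w true Fin.elim0

/-- `R_s = {(a_w, b_w) | w ∈ s}`. -/
def RelOf (M : Model sigAB) (s : Set M.W) : Set (M.D × M.D) :=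
  {p | ∃ w ∈ s, p = (aVal M w, bVal M w)}

/-- An id-model (for the signature with the two constants a, b) is full if `R_W = D × D`. -/
def Model.IsFull (M : Model sigAB) : Prop := RelOf M Set.univ = Set.univ

/-- Classical existential quantifier ∃xφ := ¬∀x¬φ. -/
def cExists (x : ℕ) (φ : Formula σ) : Formula σ := (Formula.all x φ.neg).neg

/-- ⋀_{i<j<n} (xᵢ ≠ xⱼ). -/
def distinctFm (n : ℕ) : Formula sigAB :=
  conjList ((List.range n).flatMap fun i => (List.range n).filterMap fun j =>
    if i < j then some ((Formula.eq (.var i) (.var j)).neg) else none)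

/-- χₙ := ∃x₁…∃xₙ ⋀_{i<j} (xᵢ ≠ xⱼ), expressing that there are at least n elements. -/
def chi (n : ℕ) : Formula sigAB := (List.range n).foldr cExists (distinctFm n)

/-- The canonical full id-model over a nonempty domain `D`: worlds are pairs `(d, e)`,
with `a_{(d,e)} = d` and `b_{(d,e)} = e`. -/
def canonModel (D : Type) (hD : Nonempty D) : Model sigAB where
  W := D × D
  D := D
  wNonempty := Nonempty.map (fun d => (d, d)) hD
  dNonempty := hD
  predI := fun _ P => P.elim
  funcI := fun w f _ => cond f w.2 w.1
  eqI := fun _ => Eq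
  eqEquiv := fun _ => eq_equivalence
  predCongr := fun _ P => P.elim
  funcCongr := fun _ _ _ _ _ => rfl

/-- Extending a signature with two fresh constant symbols `a`, `b`. -/
def sigExt (σ : Sig) : Sig where
  Pred := σ.Pred
  parity := σ.parity
  Func := σ.Func ⊕ Bool
  farity := Sum.elim σ.farity (fun _ => 0)

/-- Lift of a term to the extended signature. -/
def Term.lift : Term σ → Term (sigExt σ)
  | .var n => .var n
  | .func f ts => .func (Sum.inl f) (fun i => (ts i).lift)

/-- Lift of a formula to the extended signature. -/
def Formula.lift : Formula σ → Formula (sigExt σ)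
  | .pred P ts => .pred P (fun i => (ts i).lift)
  | .eq t t' => .eq t.lift t'.lift
  | .falsum => .falsum
  | .conj φ ψ => .conj φ.lift ψ.lift
  | .idisj φ ψ => .idisj φ.lift ψ.lift
  | .impl φ ψ => .impl φ.lift ψ.lift
  | .all x φ => .all x φ.lift
  | .iex x φ => .iex x φ.lift

/-- The fresh constant `a` of the extended signature. -/
def extA : Term (sigExt σ) := .func (Sum.inr false) Fin.elim0

/-- The fresh constant `b` of the extended signature. -/
def extB : Term (sigExt σ) := .func (Sum.inr true) Fin.elim0

/-- The canonical full id-model based on a relational structure `𝓜`: worlds are pairs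
`(d, e)`; `a_{(d,e)} = d`, `b_{(d,e)} = e`, and all symbols of `σ` are interpreted
rigidly as in `𝓜`. -/
def canonModelOf (A : Struc σ) : Model (sigExt σ) where
  W := A.D × A.D
  D := A.D
  wNonempty := Nonempty.map (fun d => (d, d)) A.dNonempty
  dNonempty := A.dNonempty
  predI := fun _ P => A.predI P
  funcI := fun w f => match f with
    | .inl f₀ => fun as => A.funcI f₀ as
    | .inr b => fun _ => cond b w.2 w.1
  eqI := fun _ => Eq
  eqEquiv := fun _ => eq_equivalence
  predCongr := fun _ P as bs h => by
    have hab : as = bs := funext fun i => h i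
    rw [hab]
  funcCongr := fun w f as bs h => by
    have hab : as = bs := funext fun i => h i
    rw [hab]

/-! ### Auxiliary lemmas -/

lemma support_empty (M : Model σ) (g : ℕ → M.D) (φ : Formula σ) : Support M ∅ g φ := by
  induction φ generalizing g with
  | pred P ts => exact fun w hw => absurd hw (Set.notMem_empty w)
  | eq t t' => exact fun w hw => absurd hw (Set.notMem_empty w)
  | falsum => rfl
  | conj φ ψ ihφ ihψ => exact ⟨ihφ g, ihψ g⟩
  | idisj φ ψ ihφ ihψ => exact Or.inl (ihφ g)
  | impl φ ψ ihφ ihψ =>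
    intro t ht hφ
    have : t = ∅ := Set.subset_empty_iff.mp ht
    subst this
    exact ihψ g
  | all x φ ih => exact fun d => ih _
  | iex x φ ih => exact ⟨Classical.choice M.dNonempty, ih _⟩

lemma support_mono {M : Model σ} {s t : Set M.W} (hts : t ⊆ s) {g : ℕ → M.D}
    {φ : Formula σ} (h : Support M s g φ) : Support M t g φ := by
  induction φ generalizing g s t with
  | pred P ts => exact fun w hw => h w (hts hw)
  | eq t₀ t₁ => exact fun w hw => h w (hts hw)
  | falsum => exact Set.subset_empty_iff.mp (h ▸ hts)
  | conj φ ψ ihφ ihψ => exact ⟨ihφ hts h.1, ihψ hts h.2⟩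
  | idisj φ ψ ihφ ihψ => exact h.elim (fun h' => Or.inl (ihφ hts h')) (fun h' => Or.inr (ihψ hts h'))
  | impl φ ψ ihφ ihψ => exact fun u hu hφ => h u (hu.trans hts) hφ
  | all x φ ih => exact fun d => ih hts (h d)
  | iex x φ ih => exact h.elim (fun d hd => ⟨d, ih hts hd⟩)

lemma support_neg_singleton {M : Model σ} {w : M.W} {g : ℕ → M.D} {φ : Formula σ} :
    Support M {w} g φ.neg ↔ ¬ Support M {w} g φ := by
  constructor
  · intro h hφ
    have h1 : ({w} : Set M.W) = ∅ := h {w} subset_rfl hφ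
    exact Set.singleton_ne_empty w h1
  · intro h t ht hφ
    rcases Set.subset_singleton_iff_eq.mp ht with rfl | rfl
    · rfl
    · exact absurd hφ h

lemma support_cExists_singleton {M : Model σ} {w : M.W} {g : ℕ → M.D} {x : ℕ}
    {φ : Formula σ} :
    Support M {w} g (cExists x φ) ↔ ∃ d, Support M {w} (Function.update g x d) φ := by
  unfold cExists
  rw [support_neg_singleton]
  have : Support M {w} g (Formula.all x φ.neg) ↔
      ∀ d, Support M {w} (Function.update g x d) φ.neg := Iff.rfl
  rw [this, not_forall]
  exact exists_congr fun d => by rw [support_neg_singleton, not_not]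

lemma support_foldr_cExists {M : Model σ} {w : M.W} (l : List ℕ) (ψ : Formula σ)
    (g : ℕ → M.D) (h : Support M {w} g (l.foldr cExists ψ)) :
    ∃ g', Support M {w} g' ψ := by
  induction l generalizing g with
  | nil => exact ⟨g, h⟩
  | cons x xs ih =>
    obtain ⟨d, hd⟩ := support_cExists_singleton.mp h
    exact ih _ hd

lemma support_verum (M : Model σ) (s : Set M.W) (g : ℕ → M.D) :
    Support M s g Formula.verum := fun t _ h => h

lemma support_conjList {M : Model σ} {s : Set M.W} {g : ℕ → M.D} {l : List (Formula σ)} :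
    Support M s g (conjList l) ↔ ∀ φ ∈ l, Support M s g φ := by
  induction l with
  | nil => simp [conjList, support_verum]
  | cons φ l ih =>
    have : Support M s g (conjList (φ :: l)) ↔
        Support M s g φ ∧ Support M s g (conjList l) := Iff.rfl
    rw [this, ih]
    simp

lemma distinct_of_support {M : Model sigAB} (hid : M.IsId) {w : M.W} {g : ℕ → M.D}
    {n : ℕ} (h : Support M {w} g (distinctFm n)) :
    ∀ i j, i < j → j < n → g i ≠ g j := by
  intro i j hij hjn heq
  have hmem : (Formula.eq (σ := sigAB) (.var i) (.var j)).neg ∈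
      ((List.range n).flatMap fun i => (List.range n).filterMap fun j =>
        if i < j then some ((Formula.eq (σ := sigAB) (.var i) (.var j)).neg) else none) := by
    rw [List.mem_flatMap]
    refine ⟨i, List.mem_range.mpr (hij.trans hjn), ?_⟩
    rw [List.mem_filterMap]
    exact ⟨j, List.mem_range.mpr hjn, by rw [if_pos hij]⟩
  have h2 := support_conjList.mp h _ hmem
  rw [support_neg_singleton] at h2
  apply h2
  intro w' hw'
  rcases hw' with rfl
  exact (hid w' (g i) (g j)).mpr heq

lemma infinite_of_chi {M : Model sigAB} (hid : M.IsId) {w : M.W} {g : ℕ → M.D}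
    (h : ∀ n, Support M {w} g (chi n)) : Infinite M.D := by
  by_contra hfin
  rw [not_infinite_iff_finite] at hfin
  have : Fintype M.D := Fintype.ofFinite M.D
  set n := Fintype.card M.D + 1 with hn
  obtain ⟨g', hg'⟩ := support_foldr_cExists (List.range n) (distinctFm n) g (h n)
  have hinj : Function.Injective (fun i : Fin n => g' i.val) := by
    intro a b hab
    by_contra hne
    rcases lt_trichotomy a.val b.val with hlt | heq | hgt
    · exact distinct_of_support hid hg' a.val b.val hlt b.isLt hab
    · exact hne (Fin.ext heq)
    · exact distinct_of_support hid hg' b.val a.val hgt a.isLt hab.symm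
  have hle := Fintype.card_le_of_injective _ hinj
  rw [Fintype.card_fin] at hle
  omega

lemma exists_inj_not_surj (D : Type) [Infinite D] :
    ∃ f : D → D, Function.Injective f ∧ ∃ c, ∀ d, f d ≠ c := by
  classical
  let e := Infinite.natEmbedding D
  refine ⟨fun d => if h : ∃ n, e n = d then e (h.choose + 1) else d, ?_, e 0, ?_⟩
  · intro a b hab
    dsimp only at hab
    by_cases ha : ∃ n, e n = a <;> by_cases hb : ∃ n, e n = b
    · rw [dif_pos ha, dif_pos hb] at hab
      have h1 := e.injective hab
      have h2 : ha.choose = hb.choose := by omega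
      rw [← ha.choose_spec, ← hb.choose_spec, h2]
    · rw [dif_pos ha, dif_neg hb] at hab
      exact absurd ⟨_, hab⟩ hb
    · rw [dif_neg ha, dif_pos hb] at hab
      exact absurd ⟨_, hab.symm⟩ ha
    · rwa [dif_neg ha, dif_neg hb] at hab
  · intro d hd
    dsimp only at hd
    by_cases h : ∃ n, e n = d
    · rw [dif_pos h] at hd
      have := e.injective hd
      omega
    · rw [dif_neg h] at hd
      exact h ⟨0, hd.symm⟩

lemma val_tA (M : Model sigAB) (w : M.W) (g : ℕ → M.D) : Term.val M w g tA = aVal M w := by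
  show M.funcI w false _ = M.funcI w false Fin.elim0
  congr 1
  funext i
  exact i.elim0

lemma val_tB (M : Model sigAB) (w : M.W) (g : ℕ → M.D) : Term.val M w g tB = bVal M w := by
  show M.funcI w true _ = M.funcI w true Fin.elim0
  congr 1
  funext i
  exact i.elim0

/-- With X = {χₙ | n ∈ ℕ} (χₙ expressing "at least n elements"):
X ∪ {η} id-entails θ. -/
theorem chi_eta_entail_theta :
    EntailsId (Set.range chi ∪ {etaAB}) thetaAB := by
  intro M hid s g hsupp
  have hchi : ∀ n, Support M s g (chi n) := fun n => hsupp _ (Or.inl ⟨n, rfl⟩)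
  have heta : Support M s g etaAB := hsupp _ (Or.inr rfl)
  -- Reduce the goal to: some pair (d, e) is not realized as (a_w, b_w) for w ∈ s.
  suffices h : ∃ d e : M.D, ∀ w ∈ s, ¬ (aVal M w = d ∧ bVal M w = e) by
    obtain ⟨d, e, hde⟩ := h
    refine ⟨d, e, ?_⟩
    intro t ht hconj
    show t = ∅
    rw [Set.eq_empty_iff_forall_notMem]
    intro w hw
    have h1 : M.eqI w (Term.val M w (Function.update (Function.update g 0 d) 1 e)
        (Term.var 0)) (Term.val M w (Function.update (Function.update g 0 d) 1 e) tA) :=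
      hconj.1 w hw
    have h2 : M.eqI w (Term.val M w (Function.update (Function.update g 0 d) 1 e)
        (Term.var 1)) (Term.val M w (Function.update (Function.update g 0 d) 1 e) tB) :=
      hconj.2 w hw
    rw [val_tA] at h1
    rw [val_tB] at h2
    have h1' := (hid w _ _).mp h1
    have h2' := (hid w _ _).mp h2
    simp only [Term.val, Function.update_self, Function.update_of_ne (by norm_num : (0:ℕ) ≠ 1)]
      at h1' h2'
    exact hde w (ht hw) ⟨h1'.symm, h2'.symm⟩
  by_contra hcon
  push_neg at hcon
  -- hcon : every pair (d, e) is realized at some world of s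
  obtain ⟨d₀⟩ := M.dNonempty
  obtain ⟨w₀, hw₀s, -, -⟩ := hcon d₀ d₀
  have hchiw : ∀ n, Support M {w₀} g (chi n) :=
    fun n => support_mono (Set.singleton_subset_iff.mpr hw₀s) (hchi n)
  have : Infinite M.D := infinite_of_chi hid hchiw
  obtain ⟨f, hfinj, c, hc⟩ := exists_inj_not_surj M.D
  choose wf hwfs hwfa hwfb using fun d => hcon d (f d)
  set t : Set M.W := Set.range wf with ht
  have hts : t ⊆ s := by rintro _ ⟨d, rfl⟩; exact hwfs d
  -- the antecedent of η is supported at t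
  have hante : Support M t g (.conj (.impl (lam 0 tA) (lam 0 tB))
      (.conj (.impl (lam 0 tB) (lam 0 tA)) (iexNe tB))) := by
    refine ⟨?_, ?_, ?_⟩
    · -- =(a;b) : a rigid on u ⊆ t implies b rigid on u
      intro u hu hA
      obtain ⟨d, hd⟩ := hA
      refine ⟨f d, ?_⟩
      intro w hw
      obtain ⟨d', rfl⟩ := hu hw
      have h1 : M.eqI (wf d') (Term.val M (wf d') (Function.update g 0 d) (Term.var 0))
          (Term.val M (wf d') (Function.update g 0 d) tA) := hd (wf d') hw
      rw [val_tA] at h1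
      have h1' := (hid _ _ _).mp h1
      simp only [Term.val, Function.update_self] at h1'
      rw [val_tB]
      apply (hid _ _ _).mpr
      simp only [Term.val, Function.update_self]
      rw [hwfb d', ← hwfa d', ← h1']
    · -- =(b;a) : b rigid on u ⊆ t implies a rigid on u
      intro u hu hB
      obtain ⟨e, he⟩ := hB
      rcases Set.eq_empty_or_nonempty u with rfl | ⟨w₁, hw₁⟩
      · exact ⟨d₀, fun w hw => absurd hw (Set.notMem_empty w)⟩
      · obtain ⟨d₁, rfl⟩ := hu hw₁
        refine ⟨d₁, ?_⟩
        intro w hw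
        obtain ⟨d₂, rfl⟩ := hu hw
        have h1 : M.eqI (wf d₂) (Term.val M (wf d₂) (Function.update g 0 e) (Term.var 0))
            (Term.val M (wf d₂) (Function.update g 0 e) tB) := he (wf d₂) hw
        have h2 : M.eqI (wf d₁) (Term.val M (wf d₁) (Function.update g 0 e) (Term.var 0))
            (Term.val M (wf d₁) (Function.update g 0 e) tB) := he (wf d₁) hw₁
        rw [val_tB] at h1 h2
        have h1' := (hid _ _ _).mp h1
        have h2' := (hid _ _ _).mp h2
        simp only [Term.val, Function.update_self] at h1' h2'
        rw [hwfb d₁] at h2'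
        rw [hwfb d₂] at h1'
        have hd12 : d₁ = d₂ := hfinj (h2'.symm.trans h1')
        rw [val_tA]
        apply (hid _ _ _).mpr
        simp only [Term.val, Function.update_self]
        rw [hwfa d₂, hd12]
    · -- ∃̷x (x ≠ b) : witnessed by c ∉ range f
      refine ⟨c, ?_⟩
      intro u hu hb
      show u = ∅
      rw [Set.eq_empty_iff_forall_notMem]
      intro w hw
      obtain ⟨d', rfl⟩ := hu hw
      have h1 : M.eqI (wf d') (Term.val M (wf d') (Function.update g 0 c) (Term.var 0))
          (Term.val M (wf d') (Function.update g 0 c) tB) := hb (wf d') hw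
      rw [val_tB] at h1
      have h1' := (hid _ _ _).mp h1
      simp only [Term.val, Function.update_self] at h1'
      rw [hwfb d'] at h1'
      exact hc d' h1'.symm
  -- η gives the consequent ∃̷x (x ≠ a) at t, which is impossible since a-values cover D
  have hcons : Support M t g (iexNe tA) := heta t hts hante
  obtain ⟨d, hd⟩ := hcons
  have hsub : ({wf d} : Set M.W) ⊆ t := Set.singleton_subset_iff.mpr ⟨d, rfl⟩
  have hempty : ({wf d} : Set M.W) = ∅ := by
    apply hd {wf d} hsub
    intro w hw
    rcases hw with rfl
    have : (Function.update g 0 d 0) = aVal M (wf d) := by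
      simp only [Function.update_self]
      exact (hwfa d).symm
    rw [val_tA]
    exact (hid _ _ _).mpr this
  exact Set.singleton_ne_empty _ hempty

end InqBQ
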